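/- arXiv:0801.4713 — 2 statements merged into one kernel-verified Lean document; each statement's English description precedes it below -/
import Mathlib

section
/- For every a, b ∈ ℚ_p with a ≠ 0 there exist unique γ ∈ ℤ, j ∈ {1,…,p−1}, n ∈ R₀ and m ∈ {0,…,p−1} such that G(a,b)ψ = χ(m·p^{-1})·ψ_{γ n j} (equality of functions ℚ_p → ℂ). Moreover these parameters are characterized by: |a|_p = p^γ, |(a·|a|_p)^{-1} − j|_p ≤ p^{-1}, | |a|_p·b − n |_p ≤ 1, and | m − j·(n − |a|_p·b) |_p ≤ p^{-1} (where j, m and the rational number |a|_p are regarded as elements of ℚ_p). -/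
open MeasureTheory

/-- Action of the `p`-adic affine group on complex-valued functions:
`(G(a,b)f)(x) = |a|_p^{-1/2} f((x-b)/a)`. -/
noncomputable def Gact (p : ℕ) [Fact p.Prime] (a b : ℚ_[p]) (f : ℚ_[p] → ℂ) : ℚ_[p] → ℂ :=
  fun x => ((‖a‖ ^ (-(1/2) : ℝ) : ℝ) : ℂ) * f ((x - b) / a)

/-- `Ω(|x|_p)`: the indicator function of the unit ball `ℤ_p`. -/
noncomputable def Omega (p : ℕ) [Fact p.Prime] : ℚ_[p] → ℂ :=
  fun x => if ‖x‖ ≤ 1 then 1 else 0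

/-- `R_σ`: the set of finite sums `∑_{l=-δ}^{σ-1} n_l p^l` with digits `n_l ∈ {0,…,p-1}`,
a complete set of representatives of `ℚ_p / p^σ ℤ_p`. -/
def Rset (p : ℕ) [Fact p.Prime] (σ : ℤ) : Set ℚ_[p] :=
  { x | ∃ (δ : ℕ) (d : ℤ → ℕ), (∀ l, d l < p) ∧
      x = ∑ l ∈ Finset.Icc (-(δ : ℤ)) (σ - 1), (d l : ℚ_[p]) * (p : ℚ_[p]) ^ l }

/-- The `p`-adic wavelet `ψ_{γ n j}(x) = p^{-γ/2} χ(p⁻¹ j (p^γ x - n)) Ω(|p^γ x - n|_p)`. -/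
noncomputable def wavelet (p : ℕ) [Fact p.Prime] (χ : ℚ_[p] → ℂ) (γ : ℤ) (n : ℚ_[p]) (j : ℕ) :
    ℚ_[p] → ℂ :=
  fun x => (((p : ℝ) ^ (-(γ : ℝ) / 2) : ℝ) : ℂ) *
    χ ((p : ℚ_[p])⁻¹ * (j : ℚ_[p]) * ((p : ℚ_[p]) ^ γ * x - n)) *
    Omega p ((p : ℚ_[p]) ^ γ * x - n)

/-- The basic `p`-adic wavelet `ψ(x) = χ(p⁻¹ x) Ω(|x|_p)`. -/
noncomputable def psiw (p : ℕ) [Fact p.Prime] (χ : ℚ_[p] → ℂ) : ℚ_[p] → ℂ :=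
  fun x => χ ((p : ℚ_[p])⁻¹ * x) * Omega p x

/-!
Write `‖a‖ = p ^ γ` and `u = (a p^γ)⁻¹`, a unit of `ℤ_p`. In the variable `y = p^γ x - p^γ b`,
`G(a,b)ψ` is `p^(-γ/2) χ(p⁻¹ u y) Ω(|y|)`, and, as soon as `|p^γ b - n| ≤ 1`, `χ(m p⁻¹) ψ_{γnj}`
is `p^(-γ/2) χ(p⁻¹ (m + j (y + p^γ b - n))) Ω(|y|)`. The identity therefore says that
`χ(p⁻¹ ((u - j) y - (m - j (n - p^γ b)))) = 1` for all `y ∈ ℤ_p`. Since `y ↦ χ(p⁻¹ y)` is a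
character of `ℤ_p` of order exactly `p` with kernel `pℤ_p`, testing `y = 0, 1` shows that this is
equivalent to `|u - j| ≤ p⁻¹` and `|m - j (n - p^γ b)| ≤ p⁻¹`; evaluating at `x = b` forces
`‖a‖ = p^γ` and `|p^γ b - n| ≤ 1`. Existence and uniqueness of the parameters is then a matter of
`p`-adic digits: `j` and `m` are the leading digits of `u` and `j (n - p^γ b)`, and `n` is the
representative in `R₀` of `p^γ b` modulo `ℤ_p`.
-/

theorem Nat.sum_range_mul_pow_lt {b : ℕ} {c : ℕ → ℕ} (hc : ∀ i, c i < b) (n : ℕ) :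
    ∑ i ∈ Finset.range n, c i * b ^ i < b ^ n := by
  induction n with
  | zero => simp
  | succ n ih =>
    rw [Finset.sum_range_succ, pow_succ]
    calc _ < b ^ n + c n * b ^ n := by omega
      _ = (c n + 1) * b ^ n := by ring
      _ ≤ b ^ n * b := by rw [mul_comm]; exact Nat.mul_le_mul_left _ (hc n)

theorem Nat.sum_range_div_pow_mod_mul_pow (b K n : ℕ) :
    ∑ i ∈ Finset.range n, K / b ^ i % b * b ^ i = K % b ^ n := by
  induction n with
  | zero => simp [Nat.mod_one]
  | succ n ih => rw [Finset.sum_range_succ, ih, Nat.mod_pow_succ, mul_comm (b ^ n)]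

namespace IsUltrametricDist

variable {E : Type*} [SeminormedAddCommGroup E] [IsUltrametricDist E] {x y : E} {r : ℝ}

theorem norm_sub_le_of_norm_le (hx : ‖x‖ ≤ r) (hy : ‖y‖ ≤ r) : ‖x - y‖ ≤ r := by
  rw [sub_eq_add_neg]
  exact (norm_add_le_max _ _).trans (max_le hx (by rwa [norm_neg]))

theorem norm_le_iff_of_norm_sub_le (h : ‖x - y‖ ≤ r) : ‖x‖ ≤ r ↔ ‖y‖ ≤ r := by
  constructor
  · intro hx
    simpa [sub_sub_cancel] using norm_sub_le_of_norm_le hx h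
  · intro hy
    simpa using (norm_add_le_max (x - y) y).trans (max_le h hy)

end IsUltrametricDist

open IsUltrametricDist

theorem AddChar.map_sub_eq_one_iff {A K : Type*} [AddCommGroup A] [Field K] (ψ : AddChar A K)
    {x y : A} : ψ (x - y) = 1 ↔ ψ x = ψ y := by
  rw [AddChar.map_sub_eq_div, div_eq_one_iff_eq (ψ.val_isUnit y).ne_zero]

section Padic

variable {p : ℕ} [hp : Fact p.Prime]

theorem Padic.norm_natCast_le_one (k : ℕ) : ‖(k : ℚ_[p])‖ ≤ 1 := by
  exact_mod_cast Padic.norm_int_le_one (k : ℤ)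

theorem Padic.norm_inv_p_mul_le_one_iff {z : ℚ_[p]} :
    ‖(p : ℚ_[p])⁻¹ * z‖ ≤ 1 ↔ ‖z‖ ≤ (p : ℝ) ^ (-1 : ℤ) := by
  have hp0 : (0 : ℝ) < p := by exact_mod_cast hp.out.pos
  rw [norm_mul, norm_inv, Padic.norm_p, inv_inv, zpow_neg_one, ← le_div_iff₀' hp0, one_div]

theorem Padic.exists_natCast_lt_norm_sub_le {y : ℚ_[p]} (hy : ‖y‖ ≤ 1) (δ : ℕ) :
    ∃ K < p ^ δ, ‖y - K‖ ≤ (p : ℝ) ^ (-δ : ℤ) := by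
  set z : ℤ_[p] := ⟨y, hy⟩
  refine ⟨z.appr δ, z.appr_lt δ, ?_⟩
  have h := (PadicInt.norm_le_pow_iff_mem_span_pow _ δ).2 (z.appr_spec δ)
  rwa [← PadicInt.padic_norm_e_of_padicInt, PadicInt.coe_sub, PadicInt.coe_natCast] at h

theorem Padic.natCast_eq_of_norm_sub_le {δ K K' : ℕ} (hK : K < p ^ δ) (hK' : K' < p ^ δ)
    (h : ‖(K : ℚ_[p]) - K'‖ ≤ (p : ℝ) ^ (-δ : ℤ)) : K = K' := by
  have hdvd : ((p ^ δ : ℕ) : ℤ) ∣ (K : ℤ) - K' := by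
    push_cast
    exact (Padic.norm_int_le_pow_iff_dvd _ δ).1 (by exact_mod_cast h)
  exact Nat.ModEq.eq_of_lt_of_lt (Nat.modEq_iff_dvd.2 hdvd).symm hK hK'

end Padic

section Rset

variable {p : ℕ} [hp : Fact p.Prime]

-- `0 - 1` rather than `-1`: this is the upper bound `σ - 1` of `Rset p σ` at `σ = 0`.
theorem sum_Icc_digits_mul_zpow (δ : ℕ) (d : ℤ → ℕ) :
    ∑ l ∈ Finset.Icc (-(δ : ℤ)) (0 - 1), (d l : ℚ_[p]) * (p : ℚ_[p]) ^ l =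
      ((∑ i ∈ Finset.range δ, d (-δ + i) * p ^ i : ℕ) : ℚ_[p]) / (p : ℚ_[p]) ^ δ := by
  have hp0 : (p : ℚ_[p]) ≠ 0 := by exact_mod_cast hp.out.ne_zero
  rw [Int.Icc_eq_finset_map, Finset.sum_map, show (0 - 1 + 1 - -(δ : ℤ)).toNat = δ by omega,
    eq_div_iff (pow_ne_zero _ hp0), Finset.sum_mul]
  push_cast
  refine Finset.sum_congr rfl fun i _ => ?_
  change (d (-δ + i) : ℚ_[p]) * (p : ℚ_[p]) ^ (-(δ : ℤ) + i) * (p : ℚ_[p]) ^ δ = _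
  rw [zpow_add₀ hp0, zpow_neg, zpow_natCast, zpow_natCast]
  field_simp

theorem mem_Rset_zero_iff {x : ℚ_[p]} :
    x ∈ Rset p 0 ↔ ∃ δ : ℕ, ∃ K < p ^ δ, x = K / (p : ℚ_[p]) ^ δ := by
  constructor
  · rintro ⟨δ, d, hd, rfl⟩
    exact ⟨δ, _, Nat.sum_range_mul_pow_lt (fun i => hd _) δ, sum_Icc_digits_mul_zpow δ d⟩
  · rintro ⟨δ, K, hK, rfl⟩
    refine ⟨δ, fun l => K / p ^ (l + δ).toNat % p, fun l => Nat.mod_lt _ hp.out.pos, ?_⟩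
    simp only [sum_Icc_digits_mul_zpow, neg_add_cancel_comm, Int.toNat_natCast,
      Nat.sum_range_div_pow_mod_mul_pow, Nat.mod_eq_of_lt hK]

theorem exists_mem_Rset_zero_norm_sub_le_one (y : ℚ_[p]) : ∃ n ∈ Rset p 0, ‖y - n‖ ≤ 1 := by
  have hp1 : (1 : ℝ) < p := by exact_mod_cast hp.out.one_lt
  have hp0 : (p : ℚ_[p]) ≠ 0 := by exact_mod_cast hp.out.ne_zero
  obtain ⟨δ, hδ⟩ := pow_unbounded_of_one_lt ‖y‖ hp1
  have hy : ‖(p : ℚ_[p]) ^ δ * y‖ ≤ 1 := by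
    rw [norm_mul, Padic.norm_p_pow, zpow_neg, zpow_natCast, inv_mul_le_one₀ (by positivity)]
    exact hδ.le
  obtain ⟨K, hK, hKy⟩ := Padic.exists_natCast_lt_norm_sub_le hy δ
  refine ⟨K / (p : ℚ_[p]) ^ δ, mem_Rset_zero_iff.2 ⟨δ, K, hK, rfl⟩, ?_⟩
  rw [show y - K / (p : ℚ_[p]) ^ δ = ((p : ℚ_[p]) ^ δ * y - K) / (p : ℚ_[p]) ^ δ by
      field_simp,
    norm_div, Padic.norm_p_pow, div_le_one (by positivity)]
  exact hKy

theorem eq_of_mem_Rset_zero_of_norm_sub_le_one {n n' : ℚ_[p]} (hn : n ∈ Rset p 0)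
    (hn' : n' ∈ Rset p 0) (h : ‖n - n'‖ ≤ 1) : n = n' := by
  have hp0 : (p : ℚ_[p]) ≠ 0 := by exact_mod_cast hp.out.ne_zero
  obtain ⟨δ, K, hK, rfl⟩ := mem_Rset_zero_iff.1 hn
  obtain ⟨δ', K', hK', rfl⟩ := mem_Rset_zero_iff.1 hn'
  have hcommon : K * p ^ δ' = K' * p ^ δ := by
    refine Padic.natCast_eq_of_norm_sub_le (p := p) (δ := δ + δ') ?_ ?_ ?_
    · rw [pow_add]; exact Nat.mul_lt_mul_of_pos_right hK (pow_pos hp.out.pos _)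
    · rw [pow_add, mul_comm (p ^ δ)]
      exact Nat.mul_lt_mul_of_pos_right hK' (pow_pos hp.out.pos _)
    · rw [show ((K * p ^ δ' : ℕ) : ℚ_[p]) - (K' * p ^ δ : ℕ) =
          (K / (p : ℚ_[p]) ^ δ - K' / (p : ℚ_[p]) ^ δ') * (p : ℚ_[p]) ^ (δ + δ') by
          push_cast; field_simp; ring,
        norm_mul, Padic.norm_p_pow]
      exact mul_le_of_le_one_left (by positivity) h
  rw [div_eq_div_iff (pow_ne_zero _ hp0) (pow_ne_zero _ hp0)]
  exact_mod_cast hcommon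

end Rset

section Character

variable {p : ℕ} [hp : Fact p.Prime] (ψ : AddChar ℚ_[p] ℂ)

theorem orderOf_map_inv_p (hψ : ∀ x : ℚ_[p], ‖x‖ ≤ 1 → ψ x = 1)
    (hψ_nontriv : ψ (p : ℚ_[p])⁻¹ ≠ 1) : orderOf (ψ (p : ℚ_[p])⁻¹) = p := by
  have hp0 : (p : ℚ_[p]) ≠ 0 := by exact_mod_cast hp.out.ne_zero
  refine orderOf_eq_prime ?_ hψ_nontriv
  rw [← AddChar.map_nsmul_eq_pow, nsmul_eq_mul, mul_inv_cancel₀ hp0]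
  exact hψ 1 (by simp)

theorem map_inv_p_mul_eq_one_iff (hψ : ∀ x : ℚ_[p], ‖x‖ ≤ 1 → ψ x = 1)
    (hψ_nontriv : ψ (p : ℚ_[p])⁻¹ ≠ 1) {y : ℚ_[p]} (hy : ‖y‖ ≤ 1) :
    ψ ((p : ℚ_[p])⁻¹ * y) = 1 ↔ ‖y‖ ≤ (p : ℝ) ^ (-1 : ℤ) := by
  obtain ⟨k, -, hyk⟩ := Padic.exists_natCast_lt_norm_sub_le hy 1
  rw [Nat.cast_one] at hyk
  have hψk : ψ ((p : ℚ_[p])⁻¹ * y) = ψ (p : ℚ_[p])⁻¹ ^ k := by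
    rw [← AddChar.map_nsmul_eq_pow, ← ψ.map_sub_eq_one_iff, nsmul_eq_mul,
      mul_comm (k : ℚ_[p]), ← mul_sub]
    exact hψ _ (Padic.norm_inv_p_mul_le_one_iff.2 hyk)
  rw [hψk, ← orderOf_dvd_iff_pow_eq_one, orderOf_map_inv_p ψ hψ hψ_nontriv,
    norm_le_iff_of_norm_sub_le hyk]
  simpa [Int.natCast_dvd_natCast] using (Padic.norm_int_le_pow_iff_dvd (p := p) k 1).symm

theorem forall_map_inv_p_mul_eq_one_iff (hψ : ∀ x : ℚ_[p], ‖x‖ ≤ 1 → ψ x = 1)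
    (hψ_nontriv : ψ (p : ℚ_[p])⁻¹ ≠ 1) {v w : ℚ_[p]} (hv : ‖v‖ ≤ 1) (hw : ‖w‖ ≤ 1) :
    (∀ y : ℚ_[p], ‖y‖ ≤ 1 → ψ ((p : ℚ_[p])⁻¹ * (v * y - w)) = 1) ↔
      ‖v‖ ≤ (p : ℝ) ^ (-1 : ℤ) ∧ ‖w‖ ≤ (p : ℝ) ^ (-1 : ℤ) := by
  have hbound {r : ℝ} (hv : ‖v‖ ≤ r) (hw : ‖w‖ ≤ r) {y : ℚ_[p]} (hy : ‖y‖ ≤ 1) :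
      ‖v * y - w‖ ≤ r :=
    norm_sub_le_of_norm_le
      (by rw [norm_mul]; exact (mul_le_of_le_one_right (norm_nonneg v) hy).trans hv) hw
  have hiff {y : ℚ_[p]} (hy : ‖y‖ ≤ 1) :=
    map_inv_p_mul_eq_one_iff ψ hψ hψ_nontriv (hbound hv hw hy)
  constructor
  · intro h
    have h0 := (hiff (y := 0) (by simp)).1 (h 0 (by simp))
    have h1 := (hiff (y := 1) (by simp)).1 (h 1 (by simp))
    rw [mul_zero, zero_sub, norm_neg] at h0
    rw [mul_one] at h1
    exact ⟨(norm_le_iff_of_norm_sub_le h1).2 h0, h0⟩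
  · rintro ⟨hv', hw'⟩ y hy
    exact (hiff hy).2 (hbound hv' hw' hy)

end Character

theorem Real.rpow_neg_half_eq_rpow_iff {r q : ℝ} (hr : 0 ≤ r) (hq : 0 < q) (γ : ℤ) :
    r ^ (-(1 / 2) : ℝ) = q ^ (-(γ : ℝ) / 2) ↔ r = q ^ γ := by
  rw [show q ^ (-(γ : ℝ) / 2) = (q ^ γ) ^ (-(1 / 2) : ℝ) by
      rw [← Real.rpow_intCast, ← Real.rpow_mul hq.le]; ring_nf]
  exact Real.rpow_left_inj hr (zpow_pos hq γ).le (by norm_num)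

/-- The paper's characterization of the parameters of `G(a,b)ψ = χ(m p⁻¹) ψ_{γ n j}`. -/
def IsWaveletParam (p : ℕ) [Fact p.Prime] (a b : ℚ_[p]) (γ : ℤ) (j : ℕ) (n : ℚ_[p]) (m : ℕ) :
    Prop :=
  ‖a‖ = (p : ℝ) ^ γ ∧
  ‖(a * (p : ℚ_[p]) ^ γ)⁻¹ - (j : ℚ_[p])‖ ≤ (p : ℝ) ^ (-1 : ℤ) ∧
  ‖(p : ℚ_[p]) ^ γ * b - n‖ ≤ 1 ∧
  ‖(m : ℚ_[p]) - (j : ℚ_[p]) * (n - (p : ℚ_[p]) ^ γ * b)‖ ≤ (p : ℝ) ^ (-1 : ℤ)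

section Wavelet

variable {p : ℕ} [hp : Fact p.Prime] (ψ : AddChar ℚ_[p] ℂ) {a b : ℚ_[p]} {γ : ℤ} {j : ℕ}
  {n : ℚ_[p]} {m : ℕ}

theorem norm_inv_mul_zpow_eq_one (h : ‖a‖ = (p : ℝ) ^ γ) : ‖(a * (p : ℚ_[p]) ^ γ)⁻¹‖ = 1 := by
  have hp0 : (p : ℝ) ≠ 0 := by exact_mod_cast hp.out.ne_zero
  rw [norm_inv, norm_mul, h, Padic.norm_p_zpow, ← zpow_add₀ hp0, add_neg_cancel, zpow_zero,
    inv_one]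

theorem Gact_psiw_apply_zpow_inv_mul_add (h : ‖a‖ = (p : ℝ) ^ γ) (y : ℚ_[p]) :
    Gact p a b (psiw p ψ) (((p : ℚ_[p]) ^ γ)⁻¹ * y + b) = (((p : ℝ) ^ (-(γ : ℝ) / 2) : ℝ) : ℂ) *
      (ψ ((p : ℚ_[p])⁻¹ * ((a * (p : ℚ_[p]) ^ γ)⁻¹ * y)) * Omega p y) := by
  have ha : a ≠ 0 := norm_ne_zero_iff.1 (h ▸ (zpow_pos (by exact_mod_cast hp.out.pos) γ).ne')
  have hxb : (((p : ℚ_[p]) ^ γ)⁻¹ * y + b - b) / a = (a * (p : ℚ_[p]) ^ γ)⁻¹ * y := by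
    rw [add_sub_cancel_right, div_eq_mul_inv, mul_comm, mul_inv, mul_assoc]
  rw [Gact, psiw, hxb, (Real.rpow_neg_half_eq_rpow_iff (norm_nonneg a)
    (by exact_mod_cast hp.out.pos) γ).2 h]
  simp only [Omega, norm_mul, norm_inv_mul_zpow_eq_one h, one_mul]

theorem wavelet_apply_zpow_inv_mul_add (h : ‖(p : ℚ_[p]) ^ γ * b - n‖ ≤ 1) (y : ℚ_[p]) :
    wavelet p ψ γ n j (((p : ℚ_[p]) ^ γ)⁻¹ * y + b) = (((p : ℝ) ^ (-(γ : ℝ) / 2) : ℝ) : ℂ) *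
      ψ ((p : ℚ_[p])⁻¹ * j * (y + ((p : ℚ_[p]) ^ γ * b - n))) * Omega p y := by
  have hp0 : (p : ℚ_[p]) ≠ 0 := by exact_mod_cast hp.out.ne_zero
  have hy : (p : ℚ_[p]) ^ γ * (((p : ℚ_[p]) ^ γ)⁻¹ * y + b) - n =
      y + ((p : ℚ_[p]) ^ γ * b - n) := by
    rw [mul_add, mul_inv_cancel_left₀ (zpow_ne_zero γ hp0), add_sub_assoc]
  rw [wavelet, hy]
  congr 1
  simp only [Omega, norm_le_iff_of_norm_sub_le (show ‖y + ((p : ℚ_[p]) ^ γ * b - n) - y‖ ≤ 1 by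
    rwa [add_sub_cancel_left])]

theorem Gact_psiw_eq_iff_forall (h₁ : ‖a‖ = (p : ℝ) ^ γ)
    (h₃ : ‖(p : ℚ_[p]) ^ γ * b - n‖ ≤ 1) :
    (Gact p a b (psiw p ψ) = fun x => ψ ((m : ℚ_[p]) * (p : ℚ_[p])⁻¹) * wavelet p ψ γ n j x) ↔
      ∀ y : ℚ_[p], ‖y‖ ≤ 1 → ψ ((p : ℚ_[p])⁻¹ * (((a * (p : ℚ_[p]) ^ γ)⁻¹ - j) * y -
        (m - j * (n - (p : ℚ_[p]) ^ γ * b)))) = 1 := by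
  have hp0 : (p : ℚ_[p]) ≠ 0 := by exact_mod_cast hp.out.ne_zero
  have hc : (((p : ℝ) ^ (-(γ : ℝ) / 2) : ℝ) : ℂ) ≠ 0 := by
    exact_mod_cast (Real.rpow_pos_of_pos (by exact_mod_cast hp.out.pos) _).ne'
  have hsurj : Function.Surjective fun y : ℚ_[p] => ((p : ℚ_[p]) ^ γ)⁻¹ * y + b := fun x =>
    ⟨(p : ℚ_[p]) ^ γ * (x - b), by
      simp only [inv_mul_cancel_left₀ (zpow_ne_zero γ hp0), sub_add_cancel]⟩
  rw [funext_iff, hsurj.forall]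
  refine forall_congr' fun y => ?_
  rw [Gact_psiw_apply_zpow_inv_mul_add ψ h₁, wavelet_apply_zpow_inv_mul_add ψ h₃]
  by_cases hy : ‖y‖ ≤ 1
  · simp only [Omega, hy, if_true, mul_one, true_implies]
    rw [mul_left_comm (ψ _), mul_right_inj' hc, ← AddChar.map_add_eq_mul,
      ← ψ.map_sub_eq_one_iff]
    congr! 2
    ring
  · simp [Omega, hy]

theorem norm_eq_and_norm_sub_le_of_Gact_psiw_eq (hψ_norm : ∀ x : ℚ_[p], ‖ψ x‖ = 1) (ha : a ≠ 0)
    (h : Gact p a b (psiw p ψ) = fun x => ψ ((m : ℚ_[p]) * (p : ℚ_[p])⁻¹) * wavelet p ψ γ n j x) :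
    ‖a‖ = (p : ℝ) ^ γ ∧ ‖(p : ℚ_[p]) ^ γ * b - n‖ ≤ 1 := by
  have hb := congrArg norm (congrFun h b)
  simp only [Gact, psiw, wavelet, sub_self, zero_div, mul_zero, AddChar.map_zero_eq_one, norm_mul,
    hψ_norm, Complex.norm_real, Real.norm_of_nonneg (Real.rpow_nonneg (norm_nonneg _) _),
    Real.norm_of_nonneg (Real.rpow_nonneg (Nat.cast_nonneg p) _), Omega, norm_zero, zero_le_one,
    if_true, one_mul, mul_one] at hb
  by_cases h₃ : ‖(p : ℚ_[p]) ^ γ * b - n‖ ≤ 1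
  · rw [if_pos h₃, norm_one, mul_one,
      Real.rpow_neg_half_eq_rpow_iff (norm_nonneg a) (by exact_mod_cast hp.out.pos)] at hb
    exact ⟨hb, h₃⟩
  · rw [if_neg h₃, norm_zero, mul_zero] at hb
    exact absurd hb (Real.rpow_pos_of_pos (norm_pos_iff.2 ha) _).ne'

theorem Gact_psiw_eq_iff (hψ_norm : ∀ x : ℚ_[p], ‖ψ x‖ = 1)
    (hψ : ∀ x : ℚ_[p], ‖x‖ ≤ 1 → ψ x = 1) (hψ_nontriv : ψ (p : ℚ_[p])⁻¹ ≠ 1) (ha : a ≠ 0) :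
    (Gact p a b (psiw p ψ) = fun x => ψ ((m : ℚ_[p]) * (p : ℚ_[p])⁻¹) * wavelet p ψ γ n j x) ↔
      IsWaveletParam p a b γ j n m := by
  have hv (h₁ : ‖a‖ = (p : ℝ) ^ γ) : ‖(a * (p : ℚ_[p]) ^ γ)⁻¹ - j‖ ≤ 1 :=
    norm_sub_le_of_norm_le (norm_inv_mul_zpow_eq_one h₁).le (Padic.norm_natCast_le_one j)
  have hw (h₃ : ‖(p : ℚ_[p]) ^ γ * b - n‖ ≤ 1) :
      ‖(m : ℚ_[p]) - j * (n - (p : ℚ_[p]) ^ γ * b)‖ ≤ 1 :=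
    norm_sub_le_of_norm_le (Padic.norm_natCast_le_one m) (by
      rw [norm_mul, norm_sub_rev]
      exact mul_le_one₀ (Padic.norm_natCast_le_one j) (norm_nonneg _) h₃)
  constructor
  · intro h
    obtain ⟨h₁, h₃⟩ := norm_eq_and_norm_sub_le_of_Gact_psiw_eq ψ hψ_norm ha h
    obtain ⟨h₂, h₄⟩ := (forall_map_inv_p_mul_eq_one_iff ψ hψ hψ_nontriv (hv h₁) (hw h₃)).1
      ((Gact_psiw_eq_iff_forall ψ h₁ h₃).1 h)
    exact ⟨h₁, h₂, h₃, h₄⟩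
  · rintro ⟨h₁, h₂, h₃, h₄⟩
    exact (Gact_psiw_eq_iff_forall ψ h₁ h₃).2
      ((forall_map_inv_p_mul_eq_one_iff ψ hψ hψ_nontriv (hv h₁) (hw h₃)).2 ⟨h₂, h₄⟩)

end Wavelet

section Parameters

variable {p : ℕ} [hp : Fact p.Prime] {a b : ℚ_[p]}

theorem exists_isWaveletParam (ha : a ≠ 0) :
    ∃ γ j n m, (1 ≤ j ∧ j < p) ∧ n ∈ Rset p 0 ∧ m < p ∧ IsWaveletParam p a b γ j n m := by
  have hp1 : (p : ℝ) ^ (-1 : ℤ) < 1 :=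
    zpow_lt_one_of_neg₀ (by exact_mod_cast hp.out.one_lt) (by norm_num)
  obtain ⟨γ, h₁⟩ : ∃ γ : ℤ, ‖a‖ = (p : ℝ) ^ γ := ⟨_, Padic.norm_eq_zpow_neg_valuation ha⟩
  have hu := norm_inv_mul_zpow_eq_one h₁
  obtain ⟨j, hj, h₂⟩ := Padic.exists_natCast_lt_norm_sub_le hu.le 1
  obtain ⟨n, hn, h₃⟩ := exists_mem_Rset_zero_norm_sub_le_one ((p : ℚ_[p]) ^ γ * b)
  have hjn : ‖(j : ℚ_[p]) * (n - (p : ℚ_[p]) ^ γ * b)‖ ≤ 1 := by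
    rw [norm_mul, norm_sub_rev]
    exact mul_le_one₀ (Padic.norm_natCast_le_one j) (norm_nonneg _) h₃
  obtain ⟨m, hm, h₄⟩ := Padic.exists_natCast_lt_norm_sub_le hjn 1
  rw [pow_one] at hj hm
  rw [Nat.cast_one] at h₂ h₄
  have hj0 : j ≠ 0 := by
    rintro rfl
    rw [Nat.cast_zero, sub_zero, hu] at h₂
    exact hp1.not_ge h₂
  exact ⟨γ, j, n, m, ⟨Nat.one_le_iff_ne_zero.2 hj0, hj⟩, hn, hm, h₁, h₂, h₃,
    by rwa [norm_sub_rev]⟩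

theorem IsWaveletParam.unique {γ γ' : ℤ} {j j' m m' : ℕ} {n n' : ℚ_[p]}
    (h : IsWaveletParam p a b γ j n m) (h' : IsWaveletParam p a b γ' j' n' m')
    (hj : j < p) (hj' : j' < p) (hn : n ∈ Rset p 0) (hn' : n' ∈ Rset p 0)
    (hm : m < p) (hm' : m' < p) : (γ', j', n', m') = (γ, j, n, m) := by
  obtain ⟨h₁, h₂, h₃, h₄⟩ := h
  obtain ⟨h₁', h₂', h₃', h₄'⟩ := h'
  obtain rfl : γ' = γ :=
    zpow_right_injective₀ (by exact_mod_cast hp.out.pos) (by exact_mod_cast hp.out.ne_one)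
      (h₁'.symm.trans h₁)
  obtain rfl : j' = j := Padic.natCast_eq_of_norm_sub_le (δ := 1) (by simpa) (by simpa) (by
    simpa using norm_sub_le_of_norm_le h₂ h₂')
  obtain rfl : n' = n := eq_of_mem_Rset_zero_of_norm_sub_le_one hn' hn (by
    simpa using norm_sub_le_of_norm_le h₃ h₃')
  obtain rfl : m' = m := Padic.natCast_eq_of_norm_sub_le (δ := 1) (by simpa) (by simpa) (by
    simpa using norm_sub_le_of_norm_le h₄' h₄)
  rfl

end Parameters

theorem stmt_2 (p : ℕ) [Fact p.Prime] (χ : ℚ_[p] → ℂ)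
    (hχ_add : ∀ x y : ℚ_[p], χ (x + y) = χ x * χ y)
    (hχ_norm : ∀ x : ℚ_[p], ‖χ x‖ = 1)
    (hχ_triv : ∀ x : ℚ_[p], ‖x‖ ≤ 1 → χ x = 1)
    (hχ_nontriv : χ ((p : ℚ_[p])⁻¹) ≠ 1)
    (a b : ℚ_[p]) (ha : a ≠ 0) :
    (∃! q : ℤ × ℕ × ℚ_[p] × ℕ,
      (1 ≤ q.2.1 ∧ q.2.1 ≤ p - 1) ∧ q.2.2.1 ∈ Rset p 0 ∧ q.2.2.2 ≤ p - 1 ∧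
      Gact p a b (psiw p χ) =
        fun x => χ ((q.2.2.2 : ℚ_[p]) * (p : ℚ_[p])⁻¹) * wavelet p χ q.1 q.2.2.1 q.2.1 x) ∧
    (∀ (γ : ℤ) (j : ℕ) (n : ℚ_[p]) (m : ℕ),
      (1 ≤ j ∧ j ≤ p - 1) → n ∈ Rset p 0 → m ≤ p - 1 →
      ((Gact p a b (psiw p χ) =
          fun x => χ ((m : ℚ_[p]) * (p : ℚ_[p])⁻¹) * wavelet p χ γ n j x) ↔
        (‖a‖ = (p : ℝ) ^ γ ∧
         ‖(a * (p : ℚ_[p]) ^ γ)⁻¹ - (j : ℚ_[p])‖ ≤ (p : ℝ) ^ (-1 : ℤ) ∧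
         ‖(p : ℚ_[p]) ^ γ * b - n‖ ≤ 1 ∧
         ‖(m : ℚ_[p]) - (j : ℚ_[p]) * (n - (p : ℚ_[p]) ^ γ * b)‖ ≤ (p : ℝ) ^ (-1 : ℤ)))) := by
  obtain ⟨ψ, rfl⟩ : ∃ ψ : AddChar ℚ_[p] ℂ, ⇑ψ = χ := ⟨⟨χ, hχ_triv 0 (by simp), hχ_add⟩, rfl⟩
  have hiff {γ j n m} := Gact_psiw_eq_iff (b := b) (γ := γ) (j := j) (n := n) (m := m)
    ψ hχ_norm hχ_triv hχ_nontriv ha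
  have hlt {k : ℕ} : k ≤ p - 1 ↔ k < p := Nat.le_sub_one_iff_lt (Fact.out : p.Prime).pos
  obtain ⟨γ, j, n, m, ⟨hj₁, hj⟩, hn, hm, h⟩ := exists_isWaveletParam (b := b) ha
  refine ⟨⟨(γ, j, n, m), ⟨⟨hj₁, hlt.2 hj⟩, hn, hlt.2 hm, hiff.2 h⟩, ?_⟩,
    fun _ _ _ _ _ _ _ => hiff⟩
  rintro ⟨γ', j', n', m'⟩ ⟨⟨-, hj'⟩, hn', hm', h'⟩
  exact h.unique (hiff.1 h') hj (hlt.1 hj') hn hn' hm (hlt.1 hm')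
end

section
/- Let γ ∈ ℤ, j ∈ {1,…,p−1}, n ∈ ℚ_p, and let J ∈ ℚ_p satisfy |J − 1|_p ≤ p^{-1} and |n·(J − 1)|_p ≤ 1. Then G(J,0)ψ_{γ n j} = χ(p^{-1}·j·n·(1−J)) · ψ_{γ n j} (equality of functions ℚ_p → ℂ). -/
open MeasureTheory

/-!
On the support of `ψ_{γ n j}` the dilation by `J` only perturbs the argument `u = p^γ x - n` of
the wavelet to `(u + n(1 - J)) / J`. Since `|n(1 - J)|_p ≤ 1`, the shift by `n(1 - J)` does not
move `u` out of (or into) `ℤ_p`, and because `|J|_p = 1` neither does the division by `J`. On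
`ℤ_p` the division by `J` changes `p⁻¹ j u` by an element of `p⁻¹ j u (1 - J) / J ∈ ℤ_p`, which
`χ` does not see, while the shift contributes exactly the factor `χ(p⁻¹ j n (1 - J))`.
-/

open IsUltrametricDist

lemma norm_add_le_iff_of_norm_le {S : Type*} [SeminormedAddCommGroup S] [IsUltrametricDist S]
    {u c : S} {r : ℝ} (hc : ‖c‖ ≤ r) : ‖u + c‖ ≤ r ↔ ‖u‖ ≤ r := by
  refine ⟨fun h => ?_, fun h => (norm_add_le_max u c).trans (max_le h hc)⟩
  simpa using (norm_add_le_max (u + c) (-c)).trans (max_le h (by rwa [norm_neg]))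

lemma norm_eq_one_of_norm_sub_one_lt_one {R : Type*} [SeminormedRing R] [NormOneClass R]
    [IsUltrametricDist R] {J : R} (h : ‖J - 1‖ < 1) : ‖J‖ = 1 := by
  have := norm_add_eq_max_of_norm_ne_norm (x := J - 1) (y := 1) (by rw [norm_one]; exact h.ne)
  rwa [sub_add_cancel, norm_one, max_eq_right h.le] at this

lemma map_add_eq_of_norm_le_one {K : Type*} [Norm K] [Add K] {χ : K → ℂ}
    (hχ_add : ∀ x y : K, χ (x + y) = χ x * χ y) (hχ_triv : ∀ x : K, ‖x‖ ≤ 1 → χ x = 1)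
    (x : K) {y : K} (hy : ‖y‖ ≤ 1) : χ (x + y) = χ x := by
  rw [hχ_add, hχ_triv y hy, mul_one]

section Padic

variable {p : ℕ} [Fact p.Prime]

lemma Gact_zero_apply_of_norm_eq_one {a : ℚ_[p]} (ha : ‖a‖ = 1) (f : ℚ_[p] → ℂ) (x : ℚ_[p]) :
    Gact p a 0 f x = f (x / a) := by
  simp [Gact, ha]

lemma Omega_add_of_norm_le_one (u : ℚ_[p]) {c : ℚ_[p]} (hc : ‖c‖ ≤ 1) :
    Omega p (u + c) = Omega p u := by
  simp only [Omega, norm_add_le_iff_of_norm_le hc]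

lemma Omega_div_of_norm_eq_one (v : ℚ_[p]) {J : ℚ_[p]} (hJ : ‖J‖ = 1) :
    Omega p (v / J) = Omega p v := by
  simp only [Omega, norm_div, hJ, div_one]

lemma norm_inv_p_mul_natCast_le (j : ℕ) : ‖(p : ℚ_[p])⁻¹ * j‖ ≤ p := by
  rw [norm_mul, norm_inv, Padic.norm_p, inv_inv]
  simpa using mul_le_mul_of_nonneg_left (Padic.norm_int_le_one (p := p) j) (Nat.cast_nonneg p)

lemma map_mul_div_mul_Omega {χ : ℚ_[p] → ℂ}
    (hχ_add : ∀ x y : ℚ_[p], χ (x + y) = χ x * χ y)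
    (hχ_triv : ∀ x : ℚ_[p], ‖x‖ ≤ 1 → χ x = 1)
    {a J : ℚ_[p]} (ha : ‖a‖ ≤ p) (hJ : ‖J - 1‖ ≤ (p : ℝ)⁻¹) (hJ1 : ‖J‖ = 1) (v : ℚ_[p]) :
    χ (a * (v / J)) * Omega p v = χ (a * v) * Omega p v := by
  by_cases hv : ‖v‖ ≤ 1
  · have hJ0 : J ≠ 0 := norm_ne_zero_iff.mp (by simp [hJ1])
    have hsplit : a * (v / J) = a * v + a * v * ((1 - J) / J) := by
      field_simp
      ring
    have hsmall : ‖a * v * ((1 - J) / J)‖ ≤ 1 := by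
      have hp : (0 : ℝ) < p := by exact_mod_cast (Fact.out : p.Prime).pos
      rw [norm_mul, norm_mul, norm_div, hJ1, div_one, norm_sub_rev]
      calc ‖a‖ * ‖v‖ * ‖J - 1‖ ≤ p * 1 * (p : ℝ)⁻¹ := by gcongr
        _ = 1 := by field_simp
    rw [hsplit, map_add_eq_of_norm_le_one hχ_add hχ_triv _ hsmall]
  · simp [Omega, hv]

end Padic

theorem stmt_11_general (p : ℕ) [Fact p.Prime] (χ : ℚ_[p] → ℂ)
    (hχ_add : ∀ x y : ℚ_[p], χ (x + y) = χ x * χ y)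
    (hχ_triv : ∀ x : ℚ_[p], ‖x‖ ≤ 1 → χ x = 1)
    (γ : ℤ) (j : ℕ) (n : ℚ_[p])
    (J : ℚ_[p]) (hJ : ‖J - 1‖ ≤ (p : ℝ) ^ (-1 : ℤ)) (hnJ : ‖n * (J - 1)‖ ≤ 1) :
    Gact p J 0 (wavelet p χ γ n j) =
      fun x => χ ((p : ℚ_[p])⁻¹ * (j : ℚ_[p]) * n * (1 - J)) * wavelet p χ γ n j x := by
  rw [zpow_neg_one] at hJ
  have hJ1 : ‖J‖ = 1 := norm_eq_one_of_norm_sub_one_lt_one <|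
    hJ.trans_lt (inv_lt_one_of_one_lt₀ (by exact_mod_cast (Fact.out : p.Prime).one_lt))
  have hJ0 : J ≠ 0 := norm_ne_zero_iff.mp (by simp [hJ1])
  have hshift : ‖n * (1 - J)‖ ≤ 1 := by rwa [← neg_sub, mul_neg, norm_neg]
  funext x
  rw [Gact_zero_apply_of_norm_eq_one hJ1]
  simp only [wavelet]
  set a : ℚ_[p] := (p : ℚ_[p])⁻¹ * j
  set u : ℚ_[p] := (p : ℚ_[p]) ^ γ * x - n
  have harg : (p : ℚ_[p]) ^ γ * (x / J) - n = (u + n * (1 - J)) / J := by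
    field_simp
    ring
  rw [harg, Omega_div_of_norm_eq_one _ hJ1, mul_assoc,
    map_mul_div_mul_Omega hχ_add hχ_triv (norm_inv_p_mul_natCast_le j) hJ hJ1,
    Omega_add_of_norm_le_one _ hshift, mul_add, hχ_add, ← mul_assoc a n]
  ring

theorem stmt_11 (p : ℕ) [Fact p.Prime] (χ : ℚ_[p] → ℂ)
    (hχ_add : ∀ x y : ℚ_[p], χ (x + y) = χ x * χ y)
    (hχ_norm : ∀ x : ℚ_[p], ‖χ x‖ = 1)
    (hχ_triv : ∀ x : ℚ_[p], ‖x‖ ≤ 1 → χ x = 1)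
    (hχ_nontriv : χ ((p : ℚ_[p])⁻¹) ≠ 1)
    (γ : ℤ) (j : ℕ) (hj : 1 ≤ j ∧ j ≤ p - 1) (n : ℚ_[p])
    (J : ℚ_[p]) (hJ : ‖J - 1‖ ≤ (p : ℝ) ^ (-1 : ℤ)) (hnJ : ‖n * (J - 1)‖ ≤ 1) :
    Gact p J 0 (wavelet p χ γ n j) =
      fun x => χ ((p : ℚ_[p])⁻¹ * (j : ℚ_[p]) * n * (1 - J)) * wavelet p χ γ n j x :=
  stmt_11_general p χ hχ_add hχ_triv γ j n J hJ hnJ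
end
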